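/- If T is semistandard and T⁺ is shifted Yamanouchi, then T is Yamanouchi, i.e. the reading word w(T) is a lattice word. -/

import Mathlib

noncomputable section

/-- A partition, written 1-based: `α i` is the length of row `i` for `i ≥ 1`
(we normalize `α 0 = 0`); it is weakly decreasing and eventually zero. -/
def IsPartition (α : ℕ → ℕ) : Prop :=
  α 0 = 0 ∧ (∀ i j, 1 ≤ i → i ≤ j → α j ≤ α i) ∧ ∃ N, ∀ i, N ≤ i → α i = 0

/-- The set of cells of the skew diagram `α/β` (rows and columns 1-based):
`(i,j)` with `β i < j ≤ α i`. -/
def cellOf (α β : ℕ → ℕ) : Set (ℕ × ℕ) := {p | β p.1 < p.2 ∧ p.2 ≤ α p.1}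

/-- The conjugate partition (1-based): `(conjP α) j = #{i ≥ 1 | α i ≥ j}` for `j ≥ 1`. -/
def conjP (α : ℕ → ℕ) (j : ℕ) : ℕ := Set.ncard {i : ℕ | 1 ≤ i ∧ 1 ≤ j ∧ j ≤ α i}

/-- Semistandard skew tableau: entries weakly increase along rows (left to right) and
strictly increase down columns. -/
def IsSSkew (α β : ℕ → ℕ) (T : ℕ × ℕ → ℕ) : Prop :=
  (∀ i j j', (i, j) ∈ cellOf α β → (i, j') ∈ cellOf α β → j ≤ j' → T (i, j) ≤ T (i, j')) ∧
  (∀ i i' j, (i, j) ∈ cellOf α β → (i', j) ∈ cellOf α β → i < i' → T (i, j) < T (i', j))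

/-- Anti-semistandard skew tableau: entries strictly decrease along rows (left to right)
and weakly decrease down columns. -/
def IsAntiSSkew (α β : ℕ → ℕ) (T : ℕ × ℕ → ℕ) : Prop :=
  (∀ i j j', (i, j) ∈ cellOf α β → (i, j') ∈ cellOf α β → j < j' → T (i, j') < T (i, j)) ∧
  (∀ i i' j, (i, j) ∈ cellOf α β → (i', j) ∈ cellOf α β → i ≤ i' → T (i', j) ≤ T (i, j))

/-- `wle p q` : cell `p` comes weakly before cell `q` in the reading order of the reading
word (rows top to bottom, inside each row right to left). -/
def wle (p q : ℕ × ℕ) : Prop := p.1 < q.1 ∨ (p.1 = q.1 ∧ q.2 ≤ p.2)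

/-- Number of occurrences of the symbol `v` among the cells weakly before `x` in the
reading word of `T` (so "the `j`-th occurrence of `v` in `w(T)` is at the cell `x`" reads
`x ∈ cellOf α β ∧ T x = v ∧ occBefore α β T v x = j`). -/
def occBefore (α β : ℕ → ℕ) (T : ℕ × ℕ → ℕ) (v : ℕ) (x : ℕ × ℕ) : ℕ :=
  Set.ncard {p | p ∈ cellOf α β ∧ wle p x ∧ T p = v}

/-- Total number of occurrences of the symbol `v` in the skew tableau `T`. -/
def occCount (α β : ℕ → ℕ) (T : ℕ × ℕ → ℕ) (v : ℕ) : ℕ :=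
  Set.ncard {p | p ∈ cellOf α β ∧ T p = v}

/-- The reading word of `T` is a lattice word for the symbols `base, base+1, …` :
in every initial segment, `v+1` occurs at most as often as `v`, for every `v ≥ base`. -/
def IsLatticeFrom (α β : ℕ → ℕ) (T : ℕ × ℕ → ℕ) (base : ℕ) : Prop :=
  ∀ x ∈ cellOf α β, ∀ v, base ≤ v → occBefore α β T (v + 1) x ≤ occBefore α β T v x

/-- `T` (with symbols `m+1, m+2, …`) is shifted Yamanouchi with respect to the shift `ω`:
for every initial segment `w′` of the reading word and every `i ≥ 1`,
`ω i + a_i(w′) ≥ ω (i+1) + a_{i+1}(w′)`. -/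
def ShiftedYam (α β : ℕ → ℕ) (m : ℕ) (ω : ℕ → ℕ) (T : ℕ × ℕ → ℕ) : Prop :=
  ∀ x ∈ cellOf α β, ∀ i, 1 ≤ i →
    ω (i + 1) + occBefore α β T (m + i + 1) x ≤ ω i + occBefore α β T (m + i) x

/-- `Tm = Rp(Tp)` : if the `j`-th occurrence of the symbol `m+i` in the reading word of
`Tp` lies in column `c` of `Tp`, then the entry of `Tm` at the cell `(i, ω i + j)` is `c`. -/
def IsRp (α β : ℕ → ℕ) (m : ℕ) (ω : ℕ → ℕ) (Tp Tm : ℕ × ℕ → ℕ) : Prop :=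
  ∀ x ∈ cellOf α β, ∀ i, 1 ≤ i → Tp x = m + i →
    Tm (i, ω i + occBefore α β Tp (m + i) x) = x.2

/-- `λ⁺` : the first `m` rows of `λ`. -/
def lamPlus (m : ℕ) (la : ℕ → ℕ) : ℕ → ℕ := fun i => if i ≤ m then la i else 0

/-- `λ⁻` : the conjugate of the partition `(λ_{m+1}, λ_{m+2}, …)`. -/
def lamMinus (m : ℕ) (la : ℕ → ℕ) : ℕ → ℕ :=
  conjP (fun i => if 1 ≤ i then la (m + i) else 0)

/-! Split each count of a symbol in an initial segment of `w(T)` into the part read in `T⁺`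
(columns `≤ m`) and the part read in the canonical columns `> m`. For the segment ending at the
cell `x`, the canonical part of `m+i` is all of `λ⁻ᵢ` when row `i` lies above `x`, at most `λ⁻ᵢ`
in any case, and `0` when row `i` lies below `x`; the shifted Yamanouchi inequality for `T⁺`
absorbs exactly this difference. When `x` lies at or above row `i`, either `λ⁻ᵢ = 0`, or the row
of `x` reaches column `m+1`, and then semistandardness bounds every entry of `T⁺` read so far by
`m + i`, so `m+i+1` has not yet occurred. If `x` lies right of column `m`, the part of the
segment inside `T⁺` consists of whole rows, where the shifted Yamanouchi inequality follows by
induction on the number of rows. -/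

theorem conjP_zero (α : ℕ → ℕ) : conjP α 0 = 0 := by
  simp [conjP]

theorem conjP_eq_of_forall_iff {α : ℕ → ℕ} {r k : ℕ}
    (h : ∀ i, (1 ≤ i ∧ 1 ≤ r ∧ r ≤ α i) ↔ i ∈ Set.Icc 1 k) : conjP α r = k := by
  have hset : {i | 1 ≤ i ∧ 1 ≤ r ∧ r ≤ α i} = Set.Icc 1 k := Set.ext h
  rw [conjP, hset, Set.ncard_Icc_nat, Nat.add_sub_cancel]

theorem conjP_le_of_forall_lt_eq_zero {μ : ℕ → ℕ} {m : ℕ} (h : ∀ i, m < i → μ i = 0) (r : ℕ) :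
    conjP μ r ≤ m := by
  calc conjP μ r ≤ (Set.Icc 1 m).ncard :=
        Set.ncard_le_ncard (fun i ⟨hi, hr, hle⟩ => ⟨hi, not_lt.1 fun hm => by
          have := h i hm; omega⟩) (Set.finite_Icc 1 m)
    _ = m := by simp

namespace IsPartition

variable {la : ℕ → ℕ}

theorem finite_setOf_le (hla : IsPartition la) {r : ℕ} (hr : 1 ≤ r) :
    {i : ℕ | 1 ≤ i ∧ 1 ≤ r ∧ r ≤ la i}.Finite := by
  obtain ⟨N, hN⟩ := hla.2.2
  refine (Set.finite_Iio N).subset fun i ⟨_, _, hle⟩ => Set.mem_Iio.2 <| not_le.1 fun hNi => ?_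
  have := hN i hNi
  omega

theorem le_conjP_iff (hla : IsPartition la) {i r : ℕ} (hi : 1 ≤ i) (hr : 1 ≤ r) :
    i ≤ conjP la r ↔ r ≤ la i := by
  constructor
  · intro hle
    by_contra hlt
    have hsub : {j : ℕ | 1 ≤ j ∧ 1 ≤ r ∧ r ≤ la j} ⊆ Set.Icc 1 (i - 1) :=
      fun j ⟨hj, _, hrj⟩ => ⟨hj, not_lt.1 fun hij => hlt (hrj.trans (hla.2.1 i j hi (by omega)))⟩
    have := Set.ncard_le_ncard hsub (Set.finite_Icc _ _)
    rw [Set.ncard_Icc_nat] at this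
    unfold conjP at hle
    omega
  · intro hrle
    have hsub : Set.Icc 1 i ⊆ {j : ℕ | 1 ≤ j ∧ 1 ≤ r ∧ r ≤ la j} :=
      fun j ⟨hj, hji⟩ => ⟨hj, hr, hrle.trans (hla.2.1 j i hj hji)⟩
    have := Set.ncard_le_ncard hsub (hla.finite_setOf_le hr)
    rwa [Set.ncard_Icc_nat, Nat.add_sub_cancel] at this

theorem antitoneOn_conjP (hla : IsPartition la) : AntitoneOn (conjP la) (Set.Ici 1) := by
  intro r hr r' _ hrr'
  rcases Nat.eq_zero_or_pos (conjP la r') with h | h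
  · omega
  · exact (hla.le_conjP_iff h hr).2 <|
      hrr'.trans ((hla.le_conjP_iff h (le_trans hr hrr')).1 le_rfl)

theorem conjP_lamPlus (hla : IsPartition la) (m : ℕ) :
    conjP (lamPlus m la) = fun r => min m (conjP la r) := by
  funext r
  rcases Nat.eq_zero_or_pos r with rfl | hr
  · simp [conjP_zero]
  refine conjP_eq_of_forall_iff fun i => ?_
  by_cases him : i ≤ m
  · simp only [lamPlus, if_pos him, Set.mem_Icc, le_min_iff]
    constructor
    · rintro ⟨hi, -, hle⟩
      exact ⟨hi, him, (hla.le_conjP_iff hi hr).2 hle⟩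
    · rintro ⟨hi, -, hle⟩
      exact ⟨hi, hr, (hla.le_conjP_iff hi hr).1 hle⟩
  · simp only [lamPlus, if_neg him, Set.mem_Icc, le_min_iff]
    omega

theorem lamMinus_eq (hla : IsPartition la) (m : ℕ) :
    lamMinus m la = fun r => conjP la r - m := by
  funext r
  rcases Nat.eq_zero_or_pos r with rfl | hr
  · simp [lamMinus, conjP_zero]
  refine conjP_eq_of_forall_iff fun k => ?_
  rw [Set.mem_Icc]
  constructor
  · rintro ⟨hk, -, hle⟩
    rw [if_pos hk] at hle
    have := (hla.le_conjP_iff (by omega) hr).2 hle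
    omega
  · rintro ⟨hk, hle⟩
    rw [if_pos hk]
    exact ⟨hk, hr, (hla.le_conjP_iff (by omega) hr).1 (by omega)⟩

end IsPartition

def occRowsBefore (α β : ℕ → ℕ) (T : ℕ × ℕ → ℕ) (v r : ℕ) : ℕ :=
  Set.ncard {p | p ∈ cellOf α β ∧ p.1 < r ∧ T p = v}

def occBeforeRight (α β : ℕ → ℕ) (T : ℕ × ℕ → ℕ) (m v : ℕ) (x : ℕ × ℕ) : ℕ :=
  Set.ncard {p | p ∈ cellOf α β ∧ wle p x ∧ T p = v ∧ m < p.2}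

section Lattice

variable {m : ℕ} {α β ω : ℕ → ℕ} {T : ℕ × ℕ → ℕ}

theorem fst_le_of_wle {p x : ℕ × ℕ} (h : wle p x) : p.1 ≤ x.1 := by
  rcases h with h | h <;> omega

theorem one_le_fst_of_mem_cellOf (hα0 : α 0 = 0) {p : ℕ × ℕ} (hp : p ∈ cellOf α β) :
    1 ≤ p.1 := by
  obtain ⟨h1, h2⟩ := hp
  refine Nat.one_le_iff_ne_zero.2 fun h => ?_
  rw [h, hα0] at h2
  omega

theorem finite_cellOf_wle (α β : ℕ → ℕ) (x : ℕ × ℕ) :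
    {p | p ∈ cellOf α β ∧ wle p x}.Finite := by
  refine ((Set.finite_Iic x.1).prod
    (Set.finite_Iic ((Finset.range (x.1 + 1)).sup α))).subset ?_
  rintro p ⟨⟨-, hp2⟩, hw⟩
  have hp1 := fst_le_of_wle hw
  exact ⟨hp1, hp2.trans (Finset.le_sup (Finset.mem_range.2 (by omega)))⟩

theorem mem_cellOf_min_iff {p : ℕ × ℕ} :
    p ∈ cellOf (fun r => min m (α r)) β ↔ p ∈ cellOf α β ∧ p.2 ≤ m := by
  simp only [cellOf, Set.mem_ofPred_eq, le_min_iff]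
  tauto

theorem occBefore_eq_occBefore_min_add_occBeforeRight (m : ℕ) (α β : ℕ → ℕ) (T : ℕ × ℕ → ℕ)
    (v : ℕ) (x : ℕ × ℕ) :
    occBefore α β T v x
      = occBefore (fun r => min m (α r)) β T v x + occBeforeRight α β T m v x := by
  have hunion : {p | p ∈ cellOf α β ∧ wle p x ∧ T p = v}
      = {p | p ∈ cellOf (fun r => min m (α r)) β ∧ wle p x ∧ T p = v}
        ∪ {p | p ∈ cellOf α β ∧ wle p x ∧ T p = v ∧ m < p.2} := by
    ext p
    simp only [Set.mem_union, Set.mem_ofPred_eq, mem_cellOf_min_iff]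
    by_cases h : p.2 ≤ m
    · tauto
    · simp only [h, not_le.1 h]
      tauto
  have hdisj : Disjoint {p | p ∈ cellOf (fun r => min m (α r)) β ∧ wle p x ∧ T p = v}
      {p | p ∈ cellOf α β ∧ wle p x ∧ T p = v ∧ m < p.2} :=
    Set.disjoint_left.2 fun p h h' => by
      have := (mem_cellOf_min_iff.1 h.1).2
      have := h'.2.2.2
      omega
  rw [occBefore, occBefore, occBeforeRight, hunion, Set.ncard_union_eq hdisj
    ((finite_cellOf_wle α β x).subset fun p hp => ⟨(mem_cellOf_min_iff.1 hp.1).1, hp.2.1⟩)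
    ((finite_cellOf_wle α β x).subset fun p hp => ⟨hp.1, hp.2.1⟩)]

theorem occBeforeRight_eq_ncard (hβ : ∀ r, β r ≤ m)
    (hcanon : ∀ p ∈ cellOf α β, m < p.2 → T p = m + p.1) (i : ℕ) (x : ℕ × ℕ) :
    occBeforeRight α β T m (m + i) x = {j | j ∈ Set.Ioc m (α i) ∧ wle (i, j) x}.ncard := by
  have hset : {p | p ∈ cellOf α β ∧ wle p x ∧ T p = m + i ∧ m < p.2}
      = Prod.mk i '' {j | j ∈ Set.Ioc m (α i) ∧ wle (i, j) x} := by
    ext ⟨r, j⟩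
    simp only [Set.mem_ofPred_eq, Set.mem_image, Prod.mk.injEq]
    constructor
    · rintro ⟨hc, hw, hT, hj⟩
      obtain rfl : r = i := by
        have := hcanon _ hc hj
        simp only at this
        omega
      exact ⟨j, ⟨⟨hj, hc.2⟩, hw⟩, rfl, rfl⟩
    · rintro ⟨j, ⟨⟨hj, hjα⟩, hw⟩, rfl, rfl⟩
      have hc : (i, j) ∈ cellOf α β := ⟨(hβ i).trans_lt hj, hjα⟩
      exact ⟨hc, hw, hcanon _ hc hj, hj⟩
  rw [occBeforeRight, hset, Set.ncard_image_of_injective _ (Prod.mk_right_injective i)]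

theorem occBeforeRight_le (hβ : ∀ r, β r ≤ m)
    (hcanon : ∀ p ∈ cellOf α β, m < p.2 → T p = m + p.1) (i : ℕ) (x : ℕ × ℕ) :
    occBeforeRight α β T m (m + i) x ≤ α i - m := by
  rw [occBeforeRight_eq_ncard hβ hcanon, ← Set.ncard_Ioc_nat]
  exact Set.ncard_le_ncard (fun j hj => hj.1) (Set.finite_Ioc _ _)

theorem occBeforeRight_eq_of_lt (hβ : ∀ r, β r ≤ m)
    (hcanon : ∀ p ∈ cellOf α β, m < p.2 → T p = m + p.1) {i : ℕ} {x : ℕ × ℕ} (h : i < x.1) :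
    occBeforeRight α β T m (m + i) x = α i - m := by
  rw [occBeforeRight_eq_ncard hβ hcanon, ← Set.ncard_Ioc_nat]
  congr 1
  ext j
  exact ⟨fun hj => hj.1, fun hj => ⟨hj, Or.inl h⟩⟩

theorem occBeforeRight_eq_zero_of_lt (hβ : ∀ r, β r ≤ m)
    (hcanon : ∀ p ∈ cellOf α β, m < p.2 → T p = m + p.1) {i : ℕ} {x : ℕ × ℕ} (h : x.1 < i) :
    occBeforeRight α β T m (m + i) x = 0 := by
  rw [occBeforeRight_eq_ncard hβ hcanon, Set.ncard_eq_zero (Set.toFinite _)]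
  exact Set.eq_empty_iff_forall_notMem.2 fun j hj => by
    have := fst_le_of_wle hj.2
    simp only at this
    omega

theorem apply_le_add_fst_of_snd_le (hβ : ∀ r, β r ≤ m)
    (hcanon : ∀ p ∈ cellOf α β, m < p.2 → T p = m + p.1) (hss : IsSSkew α β T)
    {p : ℕ × ℕ} (hp : p ∈ cellOf α β) (hpm : p.2 ≤ m) (hmα : m < α p.1) :
    T p ≤ m + p.1 := by
  have hc : (p.1, m + 1) ∈ cellOf α β := ⟨Nat.lt_succ_of_le (hβ p.1), hmα⟩
  calc T p ≤ T (p.1, m + 1) := hss.1 _ _ _ hp hc (by omega)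
    _ = m + p.1 := hcanon _ hc (Nat.lt_succ_self m)

theorem occBefore_min_eq_zero (hα0 : α 0 = 0) (hα : AntitoneOn α (Set.Ici 1))
    (hβ : ∀ r, β r ≤ m) (hcanon : ∀ p ∈ cellOf α β, m < p.2 → T p = m + p.1)
    (hss : IsSSkew α β T) {i : ℕ} {x : ℕ × ℕ} (hi : x.1 ≤ i) (hx : m < α x.1) :
    occBefore (fun r => min m (α r)) β T (m + i + 1) x = 0 := by
  rw [occBefore, Set.ncard_eq_zero ((finite_cellOf_wle α β x).subset
    fun p hp => ⟨(mem_cellOf_min_iff.1 hp.1).1, hp.2.1⟩)]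
  refine Set.eq_empty_iff_forall_notMem.2 fun p ⟨hp, hw, hT⟩ => ?_
  obtain ⟨hp, hpm⟩ := mem_cellOf_min_iff.1 hp
  have hpx := fst_le_of_wle hw
  have hp1 := one_le_fst_of_mem_cellOf hα0 hp
  have := apply_le_add_fst_of_snd_le hβ hcanon hss hp hpm
    (hx.trans_le (hα (Set.mem_Ici.2 hp1) (Set.mem_Ici.2 (hp1.trans hpx)) hpx))
  omega

theorem occBefore_eq_occRowsBefore {c : ℕ} (h : ∀ p ∈ cellOf α β, p.2 < c) (v r : ℕ) :
    occBefore α β T v (r, c) = occRowsBefore α β T v r := by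
  rw [occBefore, occRowsBefore]
  congr 1
  ext p
  simp only [Set.mem_ofPred_eq, wle]
  constructor
  · rintro ⟨hp, hw, hT⟩
    have := h p hp
    exact ⟨hp, by omega, hT⟩
  · rintro ⟨hp, hr, hT⟩
    exact ⟨hp, Or.inl hr, hT⟩

theorem occRowsBefore_zero (v : ℕ) : occRowsBefore α β T v 0 = 0 := by
  simp [occRowsBefore]

theorem occRowsBefore_succ_of_le {r : ℕ} (h : α r ≤ β r) (v : ℕ) :
    occRowsBefore α β T v (r + 1) = occRowsBefore α β T v r := by
  rw [occRowsBefore, occRowsBefore]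
  congr 1
  ext p
  simp only [Set.mem_ofPred_eq]
  constructor
  · rintro ⟨hp, hr, hT⟩
    refine ⟨hp, lt_of_le_of_ne (Nat.lt_succ_iff.1 hr) fun he => ?_, hT⟩
    obtain ⟨h1, h2⟩ := hp
    rw [he] at h1 h2
    omega
  · rintro ⟨hp, hr, hT⟩
    exact ⟨hp, by omega, hT⟩

theorem occRowsBefore_succ (r v : ℕ) :
    occRowsBefore α β T v (r + 1) = occBefore α β T v (r, β r + 1) := by
  rw [occRowsBefore, occBefore]
  congr 1
  ext p
  simp only [Set.mem_ofPred_eq, wle]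
  constructor
  · rintro ⟨hp, hr, hT⟩
    have := hp.1
    refine ⟨hp, ?_, hT⟩
    rcases Nat.lt_succ_iff_lt_or_eq.1 hr with hr | hr
    · exact Or.inl hr
    · rw [hr] at this
      exact Or.inr ⟨hr, this⟩
  · rintro ⟨hp, hw, hT⟩
    exact ⟨hp, by omega, hT⟩

theorem ShiftedYam.add_occRowsBefore_le (hsy : ShiftedYam α β m ω T) {i : ℕ} (hi : 1 ≤ i)
    (hω : ω (i + 1) ≤ ω i) (r : ℕ) :
    ω (i + 1) + occRowsBefore α β T (m + i + 1) r ≤ ω i + occRowsBefore α β T (m + i) r := by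
  induction r with
  | zero => simpa only [occRowsBefore_zero, add_zero] using hω
  | succ r ih =>
    rcases lt_or_ge (β r) (α r) with h | h
    · rw [occRowsBefore_succ, occRowsBefore_succ]
      exact hsy _ ⟨Nat.lt_succ_self _, Nat.succ_le_of_lt h⟩ i hi
    · rwa [occRowsBefore_succ_of_le h, occRowsBefore_succ_of_le h]

theorem ShiftedYam.add_occBefore_min_le (hα : AntitoneOn α (Set.Ici 1))
    (hsy : ShiftedYam (fun r => min m (α r)) β m (fun r => α r - m) T)
    {x : ℕ × ℕ} (hx : x ∈ cellOf α β) {i : ℕ} (hi : 1 ≤ i) :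
    (α (i + 1) - m) + occBefore (fun r => min m (α r)) β T (m + i + 1) x
      ≤ (α i - m) + occBefore (fun r => min m (α r)) β T (m + i) x := by
  by_cases hxm : x.2 ≤ m
  · exact hsy x (mem_cellOf_min_iff.2 ⟨hx, hxm⟩) i hi
  obtain ⟨r, c⟩ := x
  have hrow : ∀ p ∈ cellOf (fun r => min m (α r)) β, p.2 < c := fun p hp => by
    have := (mem_cellOf_min_iff.1 hp).2
    simp only at hxm
    omega
  have hω : α (i + 1) - m ≤ α i - m :=
    Nat.sub_le_sub_right (hα (Set.mem_Ici.2 hi) (Set.mem_Ici.2 (by omega)) (Nat.le_succ i)) m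
  rw [occBefore_eq_occRowsBefore hrow, occBefore_eq_occRowsBefore hrow]
  exact hsy.add_occRowsBefore_le hi hω r

/-- In the application `α = λ′`, so that `min m α = (λ⁺)′` and `α - m = λ⁻`. -/
theorem isLatticeFrom_of_shiftedYam (hα0 : α 0 = 0) (hα : AntitoneOn α (Set.Ici 1))
    (hβ : ∀ r, β r ≤ m) (hcanon : ∀ p ∈ cellOf α β, m < p.2 → T p = m + p.1)
    (hss : IsSSkew α β T) (hsy : ShiftedYam (fun r => min m (α r)) β m (fun r => α r - m) T) :
    IsLatticeFrom α β T (m + 1) := by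
  intro x hx v hv
  obtain ⟨i, hi, rfl⟩ : ∃ i, 1 ≤ i ∧ v = m + i := ⟨v - m, by omega, by omega⟩
  have hsy' := hsy.add_occBefore_min_le hα hx hi
  rw [occBefore_eq_occBefore_min_add_occBeforeRight m α β T (m + i + 1) x,
    occBefore_eq_occBefore_min_add_occBeforeRight m α β T (m + i) x]
  rcases lt_or_ge i x.1 with hlt | hge
  · have hright := occBeforeRight_eq_of_lt hβ hcanon hlt
    have hright_succ := occBeforeRight_le hβ hcanon (i + 1) x
    rw [← add_assoc] at hright_succ
    omega
  · have hright_succ := occBeforeRight_eq_zero_of_lt hβ hcanon (i := i + 1) (x := x) (by omega)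
    rw [← add_assoc] at hright_succ
    rw [hright_succ]
    by_cases hmx : m < α x.1
    · rw [occBefore_min_eq_zero hα0 hα hβ hcanon hss hge hmx]
      omega
    · have hx1 : 1 ≤ x.1 := one_le_fst_of_mem_cellOf hα0 hx
      have := hα (Set.mem_Ici.2 hx1) (Set.mem_Ici.2 (hx1.trans hge)) hge
      omega

end Lattice

theorem statement14_general (m : ℕ) (la μ : ℕ → ℕ)
    (hla : IsPartition la)
    (hμl : ∀ i, μ i ≤ lamPlus m la i)
    (T : ℕ × ℕ → ℕ)
    (hcanon : ∀ p ∈ cellOf (conjP la) (conjP μ), m < p.2 → T p = m + p.1)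
    (hss : IsSSkew (conjP la) (conjP μ) T)
    (hsy : ShiftedYam (conjP (lamPlus m la)) (conjP μ) m (lamMinus m la) T) :
    IsLatticeFrom (conjP la) (conjP μ) T (m + 1) := by
  have hμm : ∀ i, m < i → μ i = 0 := fun i hi => by
    simpa [lamPlus, not_le.2 hi] using hμl i
  rw [hla.conjP_lamPlus, hla.lamMinus_eq] at hsy
  exact isLatticeFrom_of_shiftedYam (conjP_zero la) hla.antitoneOn_conjP
    (conjP_le_of_forall_lt_eq_zero hμm) hcanon hss hsy

/-- if `T` is semistandard and `T⁺` (the restriction of `T` to columns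
`1,…,m`) is shifted Yamanouchi, then `T` is Yamanouchi, i.e. `w(T)` is a lattice word. -/
theorem statement14 (m n : ℕ) (hm : 1 ≤ m) (hn : 1 ≤ n) (la μ ν : ℕ → ℕ)
    (hla : IsPartition la) (hook : la (m + 1) ≤ n)
    (hμ : IsPartition μ) (hμl : ∀ i, μ i ≤ lamPlus m la i)
    (hν : IsPartition ν) (hνω : ∀ i, lamMinus m la i ≤ ν i)
    (T : ℕ × ℕ → ℕ)
    (hrange : ∀ p ∈ cellOf (conjP la) (conjP μ), m + 1 ≤ T p ∧ T p ≤ m + n)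
    (hcanon : ∀ p ∈ cellOf (conjP la) (conjP μ), m < p.2 → T p = m + p.1)
    (hcont : ∀ i, 1 ≤ i → occCount (conjP la) (conjP μ) T (m + i) = ν i)
    (hss : IsSSkew (conjP la) (conjP μ) T)
    (hsy : ShiftedYam (conjP (lamPlus m la)) (conjP μ) m (lamMinus m la) T) :
    IsLatticeFrom (conjP la) (conjP μ) T (m + 1) :=
  statement14_general m la μ hla hμl T hcanon hss hsy
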